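/- Let Live, ClA, ClB, A, B, ProvA, ProvB, D be propositions. Assume: (i) the fixed-point equivalence D ↔ ((ClA → B) ∧ (ClB → A)) together with D; (ii) the provability-upgrade obligations Live → (ClA → ProvA) and Live → (ClB → ProvB); (iii) promise totality Live → (ClA ∨ ClB); (iv) local reflection at the diagonal instance, ProvA → A and ProvB → B; (v) separation soundness at the diagonal instance, A → ¬B; and (vi) Live. Then False. (Corollary 4.6, truth-level contradiction requires reflection.) -/
import Mathlib

/-- Corollary 4.6 (truth-level contradiction requires reflection). -/
theorem truth_level_contradiction
    (Live ClA ClB A B ProvA ProvB D : Prop)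
    (hfix : D ↔ ((ClA → B) ∧ (ClB → A)))
    (hD : D)
    (hupA : Live → (ClA → ProvA))
    (hupB : Live → (ClB → ProvB))
    (htot : Live → (ClA ∨ ClB))
    (hreflA : ProvA → A)
    (hreflB : ProvB → B)
    (hsep : A → ¬ B)
    (hlive : Live) :
    False := by
  obtain ⟨h1, h2⟩ := hfix.mp hD
  rcases htot hlive with h | h
  · exact hsep (hreflA (hupA hlive h)) (h1 h)
  · exact hsep (h2 h) (hreflB (hupB hlive h))
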